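/- Let A ∈ ℂ^{n×n} be positive definite with eigenvalues λ_1 ≥ … ≥ λ_n > 0 and let D ∈ ℂ^{m×m} be Hermitian with eigenvalues μ_1 ≤ … ≤ μ_r ≤ 0 < μ_{r+1} ≤ … ≤ μ_m, and assume r ≤ n and λ_i + μ_i > 0 for all i = 1,…,r. Then there exists a matrix K ∈ ℂ^{n×m} with ‖K‖ < 1 such that D + K*AK is positive definite and the block matrix S = [[A, −AK],[K*A, D]] ∈ ℂ^{(n+m)×(n+m)} is diagonalizable with all its eigenvalues real and positive (i.e., S is similar to a positive definite Hermitian matrix). -/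

import Mathlib

open scoped Matrix ComplexOrder

/-- The spectral (operator) norm of a complex rectangular matrix. -/
noncomputable def specNorm {n m : ℕ} (K : Matrix (Fin n) (Fin m) ℂ) : ℝ :=
  ‖LinearMap.toContinuousLinearMap (Matrix.toEuclideanLin K)‖

/-!
Conjugating by `fromBlocks U 0 0 V`, where `A = U Λ Uᴴ` and `D = V M Vᴴ`, reduces everything to
diagonal `Λ`, `M` and a rectangular-diagonal `K₀` with entries `κᵢ`, `κᵢ = 0` for `i ≥ r`.
The block matrix then splits into the `2 × 2` blocks `[[λᵢ, -λᵢκᵢ], [λᵢκᵢ, μᵢ]]` for `i < r` and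
the `1 × 1` blocks `λᵢ`, `μᵢ` otherwise. Choosing `8 (λᵢκᵢ)² = λᵢ² - 6λᵢμᵢ + μᵢ²` makes the
discriminant of the `2 × 2` block equal to `(λᵢ + μᵢ)² / 2`, so its eigenvalues
`(λᵢ + μᵢ)(2 ± √2) / 4` are distinct and positive. The same choice gives `κᵢ < 1`, because
`(7λᵢ - μᵢ)(λᵢ + μᵢ) > 0`, and `μᵢ + κᵢ²λᵢ = (λᵢ + μᵢ)² / (8λᵢ) > 0`.
-/

namespace Matrix

variable {R : Type*}

section RectDiag

def rectDiag [Zero R] (p q : ℕ) (a : ℕ → R) : Matrix (Fin p) (Fin q) R :=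
  of fun i j => if (i : ℕ) = j then a i else 0

lemma rectDiag_apply [Zero R] {p q : ℕ} (a : ℕ → R) (i : Fin p) (j : Fin q) :
    rectDiag p q a i j = if (i : ℕ) = j then a i else 0 := rfl

lemma rectDiag_congr [Zero R] {p q : ℕ} {a b : ℕ → R} (h : ∀ i < p, i < q → a i = b i) :
    rectDiag p q a = rectDiag p q b := by
  ext i j
  simp only [rectDiag_apply]
  split_ifs with hij
  · exact h i i.isLt (hij ▸ j.isLt)
  · rfl

lemma rectDiag_self [Zero R] {p : ℕ} (a : ℕ → R) :
    rectDiag p p a = diagonal fun i : Fin p => a i := by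
  ext i j
  simp only [rectDiag_apply, diagonal_apply, Fin.val_eq_val]

@[simp]
lemma rectDiag_zero [Zero R] {p q : ℕ} : rectDiag p q (fun _ => (0 : R)) = 0 := by
  ext i j
  simp [rectDiag_apply]

lemma rectDiag_add [AddZeroClass R] {p q : ℕ} (a b : ℕ → R) :
    rectDiag p q a + rectDiag p q b = rectDiag p q (a + b) := by
  ext i j
  simp only [add_apply, rectDiag_apply]
  split_ifs <;> simp

lemma rectDiag_neg [NegZeroClass R] {p q : ℕ} (a : ℕ → R) :
    -rectDiag p q a = rectDiag p q (-a) := by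
  ext i j
  simp only [neg_apply, rectDiag_apply]
  split_ifs <;> simp

lemma rectDiag_conjTranspose [AddMonoid R] [StarAddMonoid R] {p q : ℕ} (a : ℕ → R) :
    (rectDiag p q a)ᴴ = rectDiag q p (star a) := by
  ext i j
  simp only [conjTranspose_apply, rectDiag_apply, eq_comm (a := (i : ℕ))]
  split_ifs with h
  · simp [h]
  · exact star_zero R

lemma rectDiag_mul [NonUnitalNonAssocSemiring R] {p q s : ℕ} (a b : ℕ → R) :
    rectDiag p q a * rectDiag q s b =
      rectDiag p s fun i => if i < q then a i * b i else 0 := by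
  ext i j
  simp only [mul_apply, rectDiag_apply]
  by_cases hi : (i : ℕ) < q
  · rw [Finset.sum_eq_single ⟨i, hi⟩
      (fun l _ hl => by simp [Ne.symm (Fin.val_ne_of_ne hl)]) (by simp)]
    split_ifs <;> simp_all
  · rw [Finset.sum_eq_zero fun l _ => by rw [if_neg (by omega), zero_mul]]
    simp [hi]

end RectDiag

section BlockRectDiag

variable [CommRing R] {n m : ℕ}

-- The `2 × 2` matrix `f i` sits on the rows and columns `inl i`, `inr i`, truncated when
-- `n ≤ i` or `m ≤ i`.
def blockRectDiag (n m : ℕ) (f : ℕ → Matrix (Fin 2) (Fin 2) R) :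
    Matrix (Fin n ⊕ Fin m) (Fin n ⊕ Fin m) R :=
  fromBlocks (rectDiag n n fun i => f i 0 0) (rectDiag n m fun i => f i 0 1)
    (rectDiag m n fun i => f i 1 0) (rectDiag m m fun i => f i 1 1)

lemma blockRectDiag_mul {f g : ℕ → Matrix (Fin 2) (Fin 2) R}
    (hf : ∀ i, n ≤ i ∨ m ≤ i → (f i).IsDiag) :
    blockRectDiag n m f * blockRectDiag n m g = blockRectDiag n m (f * g) := by
  have h01 : ∀ i, i < n → ¬ i < m → f i 0 1 = 0 := fun i _ hm => hf i (by omega) (by decide)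
  have h10 : ∀ i, i < m → ¬ i < n → f i 1 0 = 0 := fun i _ hn => hf i (by omega) (by decide)
  simp only [blockRectDiag, fromBlocks_multiply, rectDiag_mul, rectDiag_add]
  congr 1 <;> refine rectDiag_congr fun i hp hq => ?_ <;>
    simp only [Pi.add_apply, Pi.mul_apply, mul_apply, Fin.sum_univ_two] <;>
    split_ifs <;> simp_all

lemma blockRectDiag_one : blockRectDiag n m (1 : ℕ → Matrix (Fin 2) (Fin 2) R) = 1 := by
  simp [blockRectDiag, rectDiag_self, one_apply_ne, fromBlocks_one]

lemma blockRectDiag_diagonal (x y : ℕ → R) :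
    blockRectDiag n m (fun i => diagonal ![x i, y i]) =
      diagonal (Sum.elim (fun i : Fin n => x i) (fun j : Fin m => y j)) := by
  simp [blockRectDiag, rectDiag_self, ← fromBlocks_diagonal]

lemma blockRectDiag_similar {s p δ : ℕ → Matrix (Fin 2) (Fin 2) R}
    (hs : ∀ i, n ≤ i ∨ m ≤ i → (s i).IsDiag) (hp : ∀ i, n ≤ i ∨ m ≤ i → (p i).IsDiag)
    (hdet : ∀ i, IsUnit (p i).det) (hsp : ∀ i, s i * p i = p i * δ i) :
    IsUnit (blockRectDiag n m p) ∧
      blockRectDiag n m s =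
        blockRectDiag n m p * blockRectDiag n m δ * (blockRectDiag n m p)⁻¹ := by
  have hright : blockRectDiag n m p * blockRectDiag n m (fun i => (p i)⁻¹) = 1 := by
    rw [blockRectDiag_mul hp, ← blockRectDiag_one (R := R)]
    congr 1
    funext i
    exact mul_nonsing_inv _ (hdet i)
  have hunit : IsUnit (blockRectDiag n m p).det := isUnit_det_of_right_inverse hright
  refine ⟨(isUnit_iff_isUnit_det _).mpr hunit, ?_⟩
  calc blockRectDiag n m s
      = blockRectDiag n m s * blockRectDiag n m p * (blockRectDiag n m p)⁻¹ :=
        (mul_nonsing_inv_cancel_right _ _ hunit).symm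
    _ = blockRectDiag n m p * blockRectDiag n m δ * (blockRectDiag n m p)⁻¹ := by
        rw [blockRectDiag_mul hs, blockRectDiag_mul hp, Pi.mul_def, Pi.mul_def, funext hsp]

end BlockRectDiag

lemma fin_two_mul_eq_mul_diagonal [CommRing R] {a b c t t' : R}
    (ht : t ^ 2 - (a + b) * t + (a * b + c ^ 2) = 0)
    (ht' : t' ^ 2 - (a + b) * t' + (a * b + c ^ 2) = 0) :
    !![a, -c; c, b] * !![c, c; a - t, a - t'] = !![c, c; a - t, a - t'] * diagonal ![t, t'] := by
  ext i j
  fin_cases i <;> fin_cases j <;> simp [mul_apply, Fin.sum_univ_two]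
  · ring
  · ring
  · linear_combination ht
  · linear_combination ht'

section Unitary

variable [CommRing R] [StarRing R] {ι κ : Type*} [Fintype ι] [DecidableEq ι]

lemma conjTranspose_mul_mul_of_mem_unitaryGroup {U : Matrix ι ι R}
    (hU : U ∈ unitaryGroup ι R) (X : Matrix ι κ R) : Uᴴ * (U * X) = X := by
  rw [← Matrix.mul_assoc, ← star_eq_conjTranspose, (mem_unitaryGroup_iff').mp hU, Matrix.one_mul]

lemma fromBlocks_mem_unitaryGroup [Fintype κ] [DecidableEq κ] {U : Matrix ι ι R} {V : Matrix κ κ R}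
    (hU : U ∈ unitaryGroup ι R) (hV : V ∈ unitaryGroup κ R) :
    fromBlocks U 0 0 V ∈ unitaryGroup (ι ⊕ κ) R := by
  rw [mem_unitaryGroup_iff, star_eq_conjTranspose] at hU hV ⊢
  simp [fromBlocks_conjTranspose, fromBlocks_multiply, hU, hV]

lemma conj_unitary_eq_mul_diagonal_mul_inv {W X P : Matrix ι ι R} {d : ι → R}
    (hW : W ∈ unitaryGroup ι R) (hP : IsUnit P) (hX : X = P * diagonal d * P⁻¹) :
    IsUnit (W * P) ∧ W * X * Wᴴ = W * P * diagonal d * (W * P)⁻¹ := by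
  have hWinv : W⁻¹ = Wᴴ := inv_eq_right_inv ((mem_unitaryGroup_iff).mp hW)
  refine ⟨(Unitary.isUnit_coe (U := ⟨W, hW⟩)).mul hP, ?_⟩
  rw [Matrix.mul_inv_rev, hWinv, hX]
  simp only [Matrix.mul_assoc]

end Unitary

section L2OpNorm

open scoped Matrix.Norms.L2Operator

variable {𝕜 : Type*} [RCLike 𝕜] {l n : Type*} [Fintype l] [Fintype n] [DecidableEq l]
  [DecidableEq n]

lemma l2_opNorm_unitary_mul {U : Matrix n n 𝕜} (hU : U ∈ unitaryGroup n 𝕜) (X : Matrix n l 𝕜) :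
    ‖U * X‖ = ‖X‖ := by
  have h := l2_opNorm_conjTranspose_mul_self (U * X)
  rw [conjTranspose_mul, Matrix.mul_assoc, conjTranspose_mul_mul_of_mem_unitaryGroup hU,
    l2_opNorm_conjTranspose_mul_self] at h
  exact (mul_self_inj (norm_nonneg _) (norm_nonneg _)).mp h.symm

lemma l2_opNorm_mul_unitary {U : Matrix n n 𝕜} (hU : U ∈ unitaryGroup n 𝕜) (X : Matrix l n 𝕜) :
    ‖X * U‖ = ‖X‖ := by
  rw [← l2_opNorm_conjTranspose, conjTranspose_mul,
    l2_opNorm_unitary_mul (U := Uᴴ) (Unitary.star_mem hU), l2_opNorm_conjTranspose]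

lemma l2_opNorm_rectDiag_lt_one {p q : ℕ} {a : ℕ → 𝕜} (ha : ∀ i, ‖a i‖ < 1) :
    ‖rectDiag p q a‖ < 1 := by
  have hsq : ‖rectDiag p q a‖ * ‖rectDiag p q a‖ < 1 := by
    rw [← l2_opNorm_conjTranspose_mul_self, rectDiag_conjTranspose, rectDiag_mul, rectDiag_self,
      l2_opNorm_diagonal, pi_norm_lt_iff one_pos]
    intro i
    split_ifs
    · simpa [RCLike.star_def, ← sq] using pow_lt_one₀ (norm_nonneg _) (ha i) two_ne_zero
    · simp
  nlinarith [norm_nonneg (rectDiag p q a)]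

end L2OpNorm

end Matrix

namespace JFrame

open Matrix

section JFrameMatrix

variable {R : Type*} [CommRing R] [StarRing R] {ι κ : Type*} [Fintype ι] [Fintype κ]

def jFrameMatrix (A : Matrix ι ι R) (K : Matrix ι κ R) (D : Matrix κ κ R) :
    Matrix (ι ⊕ κ) (ι ⊕ κ) R :=
  fromBlocks A (-(A * K)) (Kᴴ * A) D

variable [DecidableEq ι]

lemma jFrameMatrix_unitary_conj {U : Matrix ι ι R} {V : Matrix κ κ R}
    (hU : U ∈ unitaryGroup ι R) (A : Matrix ι ι R) (K : Matrix ι κ R) (D : Matrix κ κ R) :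
    jFrameMatrix (U * A * Uᴴ) (U * K * Vᴴ) (V * D * Vᴴ) =
      fromBlocks U 0 0 V * jFrameMatrix A K D * (fromBlocks U 0 0 V)ᴴ := by
  simp only [jFrameMatrix, fromBlocks_conjTranspose, fromBlocks_multiply, conjTranspose_mul,
    conjTranspose_conjTranspose, conjTranspose_zero, Matrix.mul_zero, Matrix.zero_mul, add_zero,
    zero_add, neg_zero, Matrix.mul_assoc, conjTranspose_mul_mul_of_mem_unitaryGroup hU,
    Matrix.neg_mul, Matrix.mul_neg]

lemma add_conjTranspose_mul_mul_unitary_conj {U : Matrix ι ι R} {V : Matrix κ κ R}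
    (hU : U ∈ unitaryGroup ι R) (A : Matrix ι ι R) (K : Matrix ι κ R) (D : Matrix κ κ R) :
    V * D * Vᴴ + (U * K * Vᴴ)ᴴ * (U * A * Uᴴ) * (U * K * Vᴴ) = V * (D + Kᴴ * A * K) * Vᴴ := by
  simp only [conjTranspose_mul, conjTranspose_conjTranspose, Matrix.mul_add, Matrix.add_mul,
    Matrix.mul_assoc, conjTranspose_mul_mul_of_mem_unitaryGroup hU]

end JFrameMatrix

lemma jFrameMatrix_diagonal_rectDiag {R : Type*} [CommRing R] [StarRing R] {n m : ℕ}
    (a k b : ℕ → R) :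
    jFrameMatrix (diagonal fun i : Fin n => a i) (rectDiag n m k) (diagonal fun j : Fin m => b j) =
      blockRectDiag n m fun i => !![a i, -(a i * k i); star (k i) * a i, b i] := by
  simp only [jFrameMatrix, blockRectDiag, ← rectDiag_self, rectDiag_mul, rectDiag_neg,
    rectDiag_conjTranspose]
  congr 1 <;> refine rectDiag_congr fun i hp hq => ?_ <;> simp [hp, hq]

noncomputable def coupling (a b : ℝ) : ℝ := √((a ^ 2 - 6 * a * b + b ^ 2) / 8) / a

noncomputable def eigenvalue (a b σ : ℝ) : ℝ := (a + b) * (2 + σ) / 4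

section Coupling

variable {a b : ℝ}

lemma sq_mul_coupling (hb : b ≤ 0) (hab : 0 < a + b) :
    8 * (a * coupling a b) ^ 2 = a ^ 2 - 6 * a * b + b ^ 2 := by
  have ha : 0 < a := by linarith
  rw [coupling, mul_div_cancel₀ _ ha.ne', Real.sq_sqrt (by nlinarith)]
  ring

lemma coupling_pos (hb : b ≤ 0) (hab : 0 < a + b) : 0 < coupling a b :=
  div_pos (Real.sqrt_pos.mpr (by nlinarith)) (by linarith)

lemma coupling_lt_one (hb : b ≤ 0) (hab : 0 < a + b) : coupling a b < 1 := by
  have ha : 0 < a := by linarith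
  rw [coupling, div_lt_one ha, Real.sqrt_lt' ha]
  nlinarith

lemma add_coupling_mul_mul_coupling_pos (hb : b ≤ 0) (hab : 0 < a + b) :
    0 < b + coupling a b * a * coupling a b := by
  have ha : 0 < a := by linarith
  have h : (b + coupling a b * a * coupling a b) * (8 * a) = (a + b) ^ 2 := by
    linear_combination sq_mul_coupling hb hab
  have : 0 < (b + coupling a b * a * coupling a b) * (8 * a) := h ▸ by positivity
  exact pos_of_mul_pos_left this (by positivity)

lemma eigenvalue_pos {σ : ℝ} (hσ : σ ^ 2 = 2) (hab : 0 < a + b) : 0 < eigenvalue a b σ := by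
  have : 0 < 2 + σ := by nlinarith
  unfold eigenvalue
  positivity

lemma eigenvalue_isRoot {σ : ℝ} (hσ : σ ^ 2 = 2) (hb : b ≤ 0) (hab : 0 < a + b) :
    eigenvalue a b σ ^ 2 - (a + b) * eigenvalue a b σ + (a * b + (a * coupling a b) ^ 2) = 0 := by
  unfold eigenvalue
  linear_combination sq_mul_coupling hb hab / 8 + (a + b) ^ 2 / 16 * hσ

end Coupling
section Model

variable {r : ℕ} {lam mu : ℕ → ℝ}

variable (r lam mu) in
noncomputable def couplings (i : ℕ) : ℝ := if i < r then coupling (lam i) (mu i) else 0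

variable (r lam mu) in
noncomputable def couplingMatrix (n m : ℕ) : Matrix (Fin n) (Fin m) ℂ :=
  rectDiag n m fun i => (couplings r lam mu i : ℂ)

variable (r lam mu) in
noncomputable def jFrameBlock (i : ℕ) : Matrix (Fin 2) (Fin 2) ℂ :=
  !![(lam i : ℂ), -(lam i * couplings r lam mu i : ℝ); (lam i * couplings r lam mu i : ℝ), mu i]

variable (r lam mu) in
noncomputable def eigvecs (i : ℕ) : Matrix (Fin 2) (Fin 2) ℂ :=
  if i < r then
    !![(lam i * coupling (lam i) (mu i) : ℝ), (lam i * coupling (lam i) (mu i) : ℝ);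
      (lam i - eigenvalue (lam i) (mu i) √2 : ℝ), (lam i - eigenvalue (lam i) (mu i) (-√2) : ℝ)]
  else 1

variable (r lam mu) in
noncomputable def eigvals (i : ℕ) : ℝ × ℝ :=
  if i < r then (eigenvalue (lam i) (mu i) √2, eigenvalue (lam i) (mu i) (-√2)) else (lam i, mu i)

lemma couplings_of_le {i : ℕ} (hi : r ≤ i) : couplings r lam mu i = 0 := if_neg (by omega)

lemma jFrameMatrix_couplingMatrix {n m : ℕ} :
    jFrameMatrix (diagonal fun i : Fin n => (lam i : ℂ)) (couplingMatrix r lam mu n m)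
        (diagonal fun j : Fin m => (mu j : ℂ)) =
      blockRectDiag n m (jFrameBlock r lam mu) := by
  rw [couplingMatrix, jFrameMatrix_diagonal_rectDiag (fun i => (lam i : ℂ)) _ (fun j => (mu j : ℂ))]
  congr 1
  funext i
  simp [jFrameBlock, Complex.conj_ofReal, mul_comm]

lemma jFrameBlock_mul_eigvecs (hmunonpos : ∀ i : ℕ, i < r → mu i ≤ 0)
    (hsum : ∀ i : ℕ, i < r → 0 < lam i + mu i) (i : ℕ) :
    jFrameBlock r lam mu i * eigvecs r lam mu i =
      eigvecs r lam mu i * diagonal ![((eigvals r lam mu i).1 : ℂ), (eigvals r lam mu i).2] := by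
  by_cases hi : i < r
  · have hroot : ∀ σ : ℝ, σ ^ 2 = 2 → _ := fun σ hσ =>
      eigenvalue_isRoot hσ (hmunonpos i hi) (hsum i hi)
    have key := fin_two_mul_eq_mul_diagonal (a := (lam i : ℂ)) (b := mu i)
      (c := ((lam i * coupling (lam i) (mu i) : ℝ) : ℂ))
      (t := eigenvalue (lam i) (mu i) √2) (t' := eigenvalue (lam i) (mu i) (-√2))
      (by exact_mod_cast hroot √2 (Real.sq_sqrt zero_le_two))
      (by exact_mod_cast hroot (-√2) (by rw [neg_sq, Real.sq_sqrt zero_le_two]))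
    simp only [jFrameBlock, couplings, eigvecs, eigvals, if_pos hi]
    convert key using 3 <;> push_cast <;> ring
  · ext x y
    fin_cases x <;> fin_cases y <;> simp [jFrameBlock, couplings, eigvecs, eigvals, hi]

lemma isUnit_det_eigvecs (hmunonpos : ∀ i : ℕ, i < r → mu i ≤ 0)
    (hsum : ∀ i : ℕ, i < r → 0 < lam i + mu i) (i : ℕ) : IsUnit (eigvecs r lam mu i).det := by
  by_cases hi : i < r
  · have hκ := coupling_pos (hmunonpos i hi) (hsum i hi)
    have hlam : 0 < lam i := by linarith [hmunonpos i hi, hsum i hi]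
    have hdet : (eigvecs r lam mu i).det =
        ((lam i * coupling (lam i) (mu i) * ((lam i + mu i) * √2 / 2) : ℝ) : ℂ) := by
      simp only [eigvecs, if_pos hi, det_fin_two_of, eigenvalue]
      push_cast
      ring
    rw [hdet, isUnit_iff_ne_zero, Complex.ofReal_ne_zero]
    have := hsum i hi
    positivity
  · simp [eigvecs, hi]

open scoped Matrix.Norms.L2Operator in
lemma norm_couplingMatrix_lt_one {n m : ℕ} (hmunonpos : ∀ i : ℕ, i < r → mu i ≤ 0)
    (hsum : ∀ i : ℕ, i < r → 0 < lam i + mu i) : ‖couplingMatrix r lam mu n m‖ < 1 := by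
  refine l2_opNorm_rectDiag_lt_one fun i => ?_
  by_cases hi : i < r
  · rw [couplings, if_pos hi, Complex.norm_real, Real.norm_eq_abs,
      abs_of_pos (coupling_pos (hmunonpos i hi) (hsum i hi))]
    exact coupling_lt_one (hmunonpos i hi) (hsum i hi)
  · simp [couplings, hi]

lemma posDef_diagonal_add_couplingMatrix {n m : ℕ} (hrn : r ≤ n)
    (hmunonpos : ∀ i : ℕ, i < r → mu i ≤ 0) (hmupos : ∀ i : ℕ, r ≤ i → i < m → 0 < mu i)
    (hsum : ∀ i : ℕ, i < r → 0 < lam i + mu i) :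
    (diagonal (fun j : Fin m => (mu j : ℂ)) + (couplingMatrix r lam mu n m)ᴴ *
      diagonal (fun i : Fin n => (lam i : ℂ)) * couplingMatrix r lam mu n m).PosDef := by
  set w : ℕ → ℝ := fun j => mu j + couplings r lam mu j * lam j * couplings r lam mu j
  have hdiag : diagonal (fun j : Fin m => (mu j : ℂ)) + (couplingMatrix r lam mu n m)ᴴ *
      diagonal (fun i : Fin n => (lam i : ℂ)) * couplingMatrix r lam mu n m =
      diagonal fun j : Fin m => (w j : ℂ) := by
    rw [couplingMatrix, ← rectDiag_self (fun j => (mu j : ℂ)),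
      ← rectDiag_self (fun i => (lam i : ℂ)), ← rectDiag_self (fun j => (w j : ℂ)),
      rectDiag_conjTranspose, rectDiag_mul, rectDiag_mul, rectDiag_add]
    refine rectDiag_congr fun i _ _ => ?_
    by_cases hin : i < n
    · simp [w, hin, Complex.conj_ofReal]
    · simp [w, hin, couplings_of_le (show r ≤ i by omega)]
  rw [hdiag]
  refine PosDef.diagonal fun j => Complex.zero_lt_real.mpr ?_
  by_cases hj : (j : ℕ) < r
  · simpa only [w, couplings, if_pos hj] using
      add_coupling_mul_mul_coupling_pos (hmunonpos j hj) (hsum j hj)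
  · simpa [w, couplings_of_le (not_lt.mp hj)] using hmupos j (not_lt.mp hj) j.isLt

theorem jFrameMatrix_couplingMatrix_similar {n m : ℕ} (hrn : r ≤ n) (hrm : r ≤ m)
    (hlampos : ∀ i : ℕ, i < n → 0 < lam i) (hmunonpos : ∀ i : ℕ, i < r → mu i ≤ 0)
    (hmupos : ∀ i : ℕ, r ≤ i → i < m → 0 < mu i) (hsum : ∀ i : ℕ, i < r → 0 < lam i + mu i) :
    ∃ (P : Matrix (Fin n ⊕ Fin m) (Fin n ⊕ Fin m) ℂ) (d : Fin n ⊕ Fin m → ℝ),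
      IsUnit P ∧ (∀ idx, 0 < d idx) ∧
      jFrameMatrix (diagonal fun i : Fin n => (lam i : ℂ)) (couplingMatrix r lam mu n m)
          (diagonal fun j : Fin m => (mu j : ℂ)) =
        P * diagonal (fun idx => (d idx : ℂ)) * P⁻¹ := by
  have hs : ∀ i, n ≤ i ∨ m ≤ i → (jFrameBlock r lam mu i).IsDiag := fun i hi x y hxy => by
    fin_cases x <;> fin_cases y <;> simp_all [jFrameBlock, couplings_of_le (show r ≤ i by omega)]
  have hp : ∀ i, n ≤ i ∨ m ≤ i → (eigvecs r lam mu i).IsDiag := fun i hi => by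
    simp [eigvecs, show ¬ i < r by omega]
  obtain ⟨hP, hsim⟩ := blockRectDiag_similar hs hp (isUnit_det_eigvecs hmunonpos hsum)
    (jFrameBlock_mul_eigvecs hmunonpos hsum)
  refine ⟨_, Sum.elim (fun i => (eigvals r lam mu i).1) (fun j => (eigvals r lam mu j).2), hP,
    ?_, ?_⟩
  · have hσ : √2 ^ 2 = 2 := Real.sq_sqrt zero_le_two
    rintro (i | j) <;> simp only [Sum.elim_inl, Sum.elim_inr, eigvals] <;> split_ifs with h
    · exact eigenvalue_pos hσ (hsum i h)
    · exact hlampos i i.isLt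
    · exact eigenvalue_pos (by rwa [neg_sq]) (hsum j h)
    · exact hmupos j (by omega) j.isLt
  · rw [jFrameMatrix_couplingMatrix, hsim, blockRectDiag_diagonal]
    congr
    ext (i | j) <;> rfl

end Model

end JFrame

open JFrame Matrix
open scoped Matrix.Norms.L2Operator

theorem exists_JframeMatrix_similar_to_Hermitian_general
    (n m r : ℕ) (hrm : r ≤ m)
    (A : Matrix (Fin n) (Fin n) ℂ) (D : Matrix (Fin m) (Fin m) ℂ)
    (lam mu : ℕ → ℝ)
    (hlampos : ∀ i : ℕ, i < n → 0 < lam i)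
    (hmunonpos : ∀ i : ℕ, i < r → mu i ≤ 0)
    (hmupos : ∀ i : ℕ, r ≤ i → i < m → 0 < mu i)
    (hAdiag : ∃ U ∈ Matrix.unitaryGroup (Fin n) ℂ,
      A = U * Matrix.diagonal (fun i : Fin n => (lam i : ℂ)) * Uᴴ)
    (hDdiag : ∃ V ∈ Matrix.unitaryGroup (Fin m) ℂ,
      D = V * Matrix.diagonal (fun j : Fin m => (mu j : ℂ)) * Vᴴ)
    (hrn : r ≤ n)
    (hsum : ∀ i : ℕ, i < r → 0 < lam i + mu i) :
    ∃ K : Matrix (Fin n) (Fin m) ℂ, specNorm K < 1 ∧ (D + Kᴴ * A * K).PosDef ∧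
      ∃ (P : Matrix (Fin n ⊕ Fin m) (Fin n ⊕ Fin m) ℂ) (d : (Fin n ⊕ Fin m) → ℝ),
        IsUnit P ∧ (∀ idx, 0 < d idx) ∧
        Matrix.fromBlocks A (-(A * K)) (Kᴴ * A) D =
          P * Matrix.diagonal (fun idx => ((d idx : ℝ) : ℂ)) * P⁻¹ := by
  obtain ⟨U, hU, rfl⟩ := hAdiag
  obtain ⟨V, hV, rfl⟩ := hDdiag
  obtain ⟨P, d, hP, hd, hsim⟩ :=
    jFrameMatrix_couplingMatrix_similar hrn hrm hlampos hmunonpos hmupos hsum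
  obtain ⟨hWP, hconj⟩ :=
    conj_unitary_eq_mul_diagonal_mul_inv (fromBlocks_mem_unitaryGroup hU hV) hP hsim
  refine ⟨U * couplingMatrix r lam mu n m * Vᴴ, ?_, ?_, _, d, hWP, hd, ?_⟩
  · change ‖U * couplingMatrix r lam mu n m * Vᴴ‖ < 1
    rw [l2_opNorm_mul_unitary (U := Vᴴ) (Unitary.star_mem hV), l2_opNorm_unitary_mul hU]
    exact norm_couplingMatrix_lt_one hmunonpos hsum
  · rw [add_conjTranspose_mul_mul_unitary_conj hU]
    exact (IsUnit.posDef_star_right_conjugate_iff (Unitary.isUnit_coe (U := ⟨V, hV⟩))).mpr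
      (posDef_diagonal_add_couplingMatrix hrn hmunonpos hmupos hsum)
  · rw [← hconj]
    exact jFrameMatrix_unitary_conj hU _ _ _

/-- Let `A ∈ ℂ^{n×n}` be positive definite with eigenvalues (nonincreasing)
`lam 0 ≥ … ≥ lam (n-1) > 0`, let `D ∈ ℂ^{m×m}` be Hermitian with eigenvalues
(nondecreasing) `mu 0 ≤ … ≤ mu (r-1) ≤ 0 < mu r ≤ … ≤ mu (m-1)`, and assume `r ≤ n` and
`lam i + mu i > 0` for all `i < r`.  Then there is a strict contraction `K` (`‖K‖ < 1`)
such that `D + KᴴAK` is positive definite and the block matrix `S = [[A, −AK],[KᴴA, D]]`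
is diagonalizable with all eigenvalues real and positive, i.e. `S` is similar to a positive
definite Hermitian (diagonal) matrix. -/
theorem exists_JframeMatrix_similar_to_Hermitian
    (n m r : ℕ) (hrm : r ≤ m)
    (A : Matrix (Fin n) (Fin n) ℂ) (D : Matrix (Fin m) (Fin m) ℂ)
    (hA : A.PosDef)
    (lam mu : ℕ → ℝ)
    (hlam : ∀ i j : ℕ, i ≤ j → j < n → lam j ≤ lam i)
    (hlampos : ∀ i : ℕ, i < n → 0 < lam i)
    (hmu : ∀ i j : ℕ, i ≤ j → j < m → mu i ≤ mu j)
    (hmunonpos : ∀ i : ℕ, i < r → mu i ≤ 0)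
    (hmupos : ∀ i : ℕ, r ≤ i → i < m → 0 < mu i)
    (hAdiag : ∃ U ∈ Matrix.unitaryGroup (Fin n) ℂ,
      A = U * Matrix.diagonal (fun i : Fin n => (lam i : ℂ)) * Uᴴ)
    (hDdiag : ∃ V ∈ Matrix.unitaryGroup (Fin m) ℂ,
      D = V * Matrix.diagonal (fun j : Fin m => (mu j : ℂ)) * Vᴴ)
    (hrn : r ≤ n)
    (hsum : ∀ i : ℕ, i < r → 0 < lam i + mu i) :
    ∃ K : Matrix (Fin n) (Fin m) ℂ, specNorm K < 1 ∧ (D + Kᴴ * A * K).PosDef ∧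
      ∃ (P : Matrix (Fin n ⊕ Fin m) (Fin n ⊕ Fin m) ℂ) (d : (Fin n ⊕ Fin m) → ℝ),
        IsUnit P ∧ (∀ idx, 0 < d idx) ∧
        Matrix.fromBlocks A (-(A * K)) (Kᴴ * A) D =
          P * Matrix.diagonal (fun idx => ((d idx : ℝ) : ℂ)) * P⁻¹ :=
  exists_JframeMatrix_similar_to_Hermitian_general n m r hrm A D lam mu hlampos hmunonpos hmupos
    hAdiag hDdiag hrn hsum
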